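/- Injectivity from sign conditions on partial derivatives (key step in the proof of Lemma 3.1). Let Ω ⊂ ℝ² be an open convex set and let w₁, w₂ : Ω → ℝ be differentiable functions such that at every point of Ω one has ∂w₁/∂z₁ > 0, ∂w₁/∂z₂ > 0, ∂w₂/∂z₁ < 0 and ∂w₂/∂z₂ > 0. Then the map z ↦ (w₁(z), w₂(z)) is injective on Ω. -/
import Mathlib

/-- Mean-value / Rolle step: if `w` is differentiable on a convex set containing `z, z'`
and `w z = w z'`, then the directional derivative in direction `z' - z` vanishes at some
point of the set. -/
lemma exists_fderiv_dir_zero (Ω : Set (ℝ × ℝ)) (hΩconv : Convex ℝ Ω)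
    (w : ℝ × ℝ → ℝ) (hw : ∀ z ∈ Ω, DifferentiableAt ℝ w z)
    {z z' : ℝ × ℝ} (hz : z ∈ Ω) (hz' : z' ∈ Ω) (heq : w z = w z') :
    ∃ ξ ∈ Ω, fderiv ℝ w ξ (z' - z) = 0 := by
  have hmem : ∀ t ∈ Set.Icc (0:ℝ) 1, z + t • (z' - z) ∈ Ω := fun t ht =>
    hΩconv.add_smul_sub_mem hz hz' ht
  have hline : ∀ t : ℝ, HasDerivAt (fun s : ℝ => z + s • (z' - z)) (z' - z) t := by
    intro t
    have := ((hasDerivAt_id t).smul_const (z' - z)).const_add z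
    simpa using this
  have hderiv : ∀ t ∈ Set.Icc (0:ℝ) 1,
      HasDerivAt (fun s : ℝ => w (z + s • (z' - z)))
        (fderiv ℝ w (z + t • (z' - z)) (z' - z)) t := by
    intro t ht
    exact ((hw _ (hmem t ht)).hasFDerivAt).comp_hasDerivAt t (hline t)
  have hcont : ContinuousOn (fun s : ℝ => w (z + s • (z' - z))) (Set.Icc 0 1) :=
    fun t ht => ((hderiv t ht).continuousAt).continuousWithinAt
  have hI : (fun s : ℝ => w (z + s • (z' - z))) 0 = (fun s : ℝ => w (z + s • (z' - z))) 1 := by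
    simp [heq]
  obtain ⟨c, hc, hc0⟩ := exists_hasDerivAt_eq_zero (f := fun s : ℝ => w (z + s • (z' - z)))
    (f' := fun t => fderiv ℝ w (z + t • (z' - z)) (z' - z)) one_pos hcont hI
    (fun t ht => hderiv t (Set.mem_Icc_of_Ioo ht))
  exact ⟨z + c • (z' - z), hmem c (Set.mem_Icc_of_Ioo hc), hc0⟩

/-- **Key step in the proof of Lemma 3.1** (Injectivity from sign conditions on partial
derivatives). If `w₁, w₂` are differentiable on an open convex set `Ω ⊂ ℝ²` with
`∂w₁/∂z₁ > 0`, `∂w₁/∂z₂ > 0`, `∂w₂/∂z₁ < 0`, `∂w₂/∂z₂ > 0` everywhere on `Ω`, then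
`z ↦ (w₁ z, w₂ z)` is injective on `Ω`. -/
theorem injOn_of_partial_deriv_signs
    (Ω : Set (ℝ × ℝ)) (hΩopen : IsOpen Ω) (hΩconv : Convex ℝ Ω)
    (w₁ w₂ : ℝ × ℝ → ℝ)
    (hw₁ : ∀ z ∈ Ω, DifferentiableAt ℝ w₁ z)
    (hw₂ : ∀ z ∈ Ω, DifferentiableAt ℝ w₂ z)
    (h11 : ∀ z ∈ Ω, 0 < fderiv ℝ w₁ z ((1 : ℝ), (0 : ℝ)))
    (h12 : ∀ z ∈ Ω, 0 < fderiv ℝ w₁ z ((0 : ℝ), (1 : ℝ)))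
    (h21 : ∀ z ∈ Ω, fderiv ℝ w₂ z ((1 : ℝ), (0 : ℝ)) < 0)
    (h22 : ∀ z ∈ Ω, 0 < fderiv ℝ w₂ z ((0 : ℝ), (1 : ℝ))) :
    Set.InjOn (fun z => (w₁ z, w₂ z)) Ω := by
  intro z hz z' hz' heq
  simp only [Prod.mk.injEq] at heq
  obtain ⟨ξ, hξ, hξ0⟩ := exists_fderiv_dir_zero Ω hΩconv w₁ hw₁ hz hz' heq.1
  obtain ⟨η, hη, hη0⟩ := exists_fderiv_dir_zero Ω hΩconv w₂ hw₂ hz hz' heq.2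
  set a := z'.1 - z.1 with ha
  set b := z'.2 - z.2 with hb
  have hdecomp : (z' - z : ℝ × ℝ) = a • ((1:ℝ), (0:ℝ)) + b • ((0:ℝ), (1:ℝ)) := by
    simp [ha, hb, Prod.ext_iff, Prod.smul_def]
  have e1 : a * fderiv ℝ w₁ ξ ((1:ℝ), (0:ℝ)) + b * fderiv ℝ w₁ ξ ((0:ℝ), (1:ℝ)) = 0 := by
    have := hξ0
    rw [hdecomp, map_add, map_smul, map_smul] at this
    simpa [smul_eq_mul] using this
  have e2 : a * fderiv ℝ w₂ η ((1:ℝ), (0:ℝ)) + b * fderiv ℝ w₂ η ((0:ℝ), (1:ℝ)) = 0 := by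
    have := hη0
    rw [hdecomp, map_add, map_smul, map_smul] at this
    simpa [smul_eq_mul] using this
  have p1 := h11 ξ hξ
  have p2 := h12 ξ hξ
  have q1 := h21 η hη
  have q2 := h22 η hη
  have ha0 : a = 0 := by nlinarith [mul_pos p1 q2, mul_pos p2 (neg_pos.mpr q1)]
  have hb0 : b = 0 := by nlinarith [mul_pos p1 q2, mul_pos p2 (neg_pos.mpr q1)]
  exact Prod.ext (sub_eq_zero.mp (ha.symm.trans ha0)).symm
    (sub_eq_zero.mp (hb.symm.trans hb0)).symm
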